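/- arXiv:1205.3674 — 3 statements merged into one kernel-verified Lean document; each statement's English description precedes it below -/
import Mathlib

section
/- A sequence (x_n) of real numbers is downward half Cauchy if and only if every subsequence of (x_n) is downward half quasi-Cauchy. -/
def UpHalfCauchy (x : ℕ → ℝ) : Prop :=
  ∀ ε > 0, ∃ n₀ : ℕ, ∀ n m : ℕ, n₀ ≤ n → n ≤ m → x n - x m < ε

def DownHalfCauchy (x : ℕ → ℝ) : Prop :=
  ∀ ε > 0, ∃ n₀ : ℕ, ∀ n m : ℕ, n₀ ≤ n → n ≤ m → x m - x n < ε

def UpHalfQuasiCauchy (x : ℕ → ℝ) : Prop :=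
  ∀ ε > 0, ∃ n₀ : ℕ, ∀ n : ℕ, n₀ ≤ n → x n - x (n + 1) < ε

def DownHalfQuasiCauchy (x : ℕ → ℝ) : Prop :=
  ∀ ε > 0, ∃ n₀ : ℕ, ∀ n : ℕ, n₀ ≤ n → x (n + 1) - x n < ε

def QuasiCauchy (x : ℕ → ℝ) : Prop :=
  ∀ ε > 0, ∃ n₀ : ℕ, ∀ n : ℕ, n₀ ≤ n → |x (n + 1) - x n| < ε

/-! If `x` is not downward half Cauchy, some `ε > 0` admits, beyond every index, a pair `n < m`
with `x m - x n ≥ ε`. Choosing such pairs one after the other and listing their entries in order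
gives a strictly increasing `φ` for which `x (φ (2k+1)) - x (φ (2k)) ≥ ε` for every `k`, so
`x ∘ φ` is not downward half quasi-Cauchy. -/

theorem exists_strictMono_pairwise_of_forall_exists {P : ℕ → ℕ → Prop}
    (h : ∀ N, ∃ n m, N ≤ n ∧ n < m ∧ P n m) :
    ∃ φ : ℕ → ℕ, StrictMono φ ∧ ∀ k, P (φ (2 * k)) (φ (2 * k + 1)) := by
  choose a b ha hab hP using h
  -- the `k`-th pair `(a (N k), b (N k))` is taken beyond the threshold `N k`, just past the previous pair
  set N : ℕ → ℕ := fun k => (fun i => b i + 1)^[k] 0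
  have hN_succ (k : ℕ) : N (k + 1) = b (N k) + 1 := Function.iterate_succ_apply' _ _ _
  set φ : ℕ → ℕ := fun n => if n % 2 = 0 then a (N (n / 2)) else b (N (n / 2))
  have hφ_even (k : ℕ) : φ (2 * k) = a (N k) := by simp [φ]
  have hφ_odd (k : ℕ) : φ (2 * k + 1) = b (N k) := by simp [φ, Nat.mul_add_div]
  refine ⟨φ, strictMono_nat_of_lt_succ fun n => ?_, fun k => ?_⟩
  · obtain ⟨k, rfl | rfl⟩ := Nat.even_or_odd' n
    · rw [hφ_even, hφ_odd]
      exact hab _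
    · rw [hφ_odd, show 2 * k + 1 + 1 = 2 * (k + 1) by ring, hφ_even, hN_succ]
      exact (Nat.lt_succ_self _).trans_le (ha _)
  · rw [hφ_even, hφ_odd]
    exact hP _

theorem DownHalfCauchy.downHalfQuasiCauchy_comp {x : ℕ → ℝ} (hx : DownHalfCauchy x)
    {φ : ℕ → ℕ} (hφ : StrictMono φ) : DownHalfQuasiCauchy (x ∘ φ) := by
  intro ε hε
  obtain ⟨n₀, hn₀⟩ := hx ε hε
  exact ⟨n₀, fun n hn => hn₀ _ _ (hn.trans hφ.le_apply) (hφ n.lt_succ_self).le⟩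

theorem exists_gap_of_not_downHalfCauchy {x : ℕ → ℝ} (hx : ¬DownHalfCauchy x) :
    ∃ ε > 0, ∀ N, ∃ n m, N ≤ n ∧ n < m ∧ ε ≤ x m - x n := by
  simp only [DownHalfCauchy, not_forall, not_exists, not_lt, exists_prop] at hx
  obtain ⟨ε, hε, hgap⟩ := hx
  refine ⟨ε, hε, fun N => ?_⟩
  obtain ⟨n, m, hNn, hnm, hε_le⟩ := hgap N
  refine ⟨n, m, hNn, hnm.lt_of_ne ?_, hε_le⟩
  rintro rfl
  simp only [sub_self] at hε_le
  exact hε.not_ge hε_le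

theorem downHalfCauchy_of_forall_downHalfQuasiCauchy_comp {x : ℕ → ℝ}
    (H : ∀ φ : ℕ → ℕ, StrictMono φ → DownHalfQuasiCauchy (x ∘ φ)) : DownHalfCauchy x := by
  by_contra hx
  obtain ⟨ε, hε, hgap⟩ := exists_gap_of_not_downHalfCauchy hx
  obtain ⟨φ, hφ, hφ_gap⟩ := exists_strictMono_pairwise_of_forall_exists hgap
  obtain ⟨n₀, hn₀⟩ := H φ hφ ε hε
  exact (hn₀ (2 * n₀) (by omega)).not_ge (hφ_gap n₀)

theorem stmt_1 (x : ℕ → ℝ) :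
    DownHalfCauchy x ↔
      ∀ φ : ℕ → ℕ, StrictMono φ → DownHalfQuasiCauchy (x ∘ φ) :=
  ⟨fun hx _ hφ => hx.downHalfQuasiCauchy_comp hφ, downHalfCauchy_of_forall_downHalfQuasiCauchy_comp⟩
end

section
/- If f : ℝ → ℝ is upward half quasi-Cauchy continuous on a set E ⊆ ℝ, then f is sequentially continuous on E: for any sequence (x_n) of points in E converging to a point ℓ ∈ E, the sequence (f(x_n)) converges to f(ℓ). -/
/-! Feeding `f` the sequence `x₀, ℓ, x₁, ℓ, x₂, …`, which converges to `ℓ` and is therefore upward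
half quasi-Cauchy, yields `f x₀, f ℓ, f x₁, f ℓ, …`. Its consecutive drops bound `f (x n) - f ℓ`
(from an even index) and `f ℓ - f (x n)` (from an odd index) eventually by any `ε > 0`. -/

open Filter Topology

def interleave {α : Type*} (a b : ℕ → α) (n : ℕ) : α :=
  if Even n then a (n / 2) else b (n / 2)

section Interleave

variable {α β : Type*} (a b : ℕ → α)

@[simp]
theorem interleave_two_mul (n : ℕ) : interleave a b (2 * n) = a n := by
  simp [interleave]

@[simp]
theorem interleave_two_mul_add_one (n : ℕ) : interleave a b (2 * n + 1) = b n := by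
  simp [interleave, Nat.add_div_of_dvd_right]

theorem interleave_comp (f : α → β) :
    (fun n => f (interleave a b n)) = interleave (fun n => f (a n)) (fun n => f (b n)) := by
  funext n
  exact apply_ite f _ _ _

variable {a b}

theorem interleave_mem {s : Set α} (ha : ∀ n, a n ∈ s) (hb : ∀ n, b n ∈ s) (n : ℕ) :
    interleave a b n ∈ s := by
  unfold interleave
  split_ifs
  exacts [ha _, hb _]

theorem Filter.Tendsto.interleave {l : Filter α} (ha : Tendsto a atTop l) (hb : Tendsto b atTop l) :
    Tendsto (interleave a b) atTop l := by
  have half : Tendsto (· / 2) atTop atTop := Nat.tendsto_div_const_atTop two_ne_zero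
  intro s hs
  change ∀ᶠ n in atTop, _root_.interleave a b n ∈ s
  filter_upwards [half.eventually (ha.eventually_mem hs), half.eventually (hb.eventually_mem hs)]
    with n han hbn
  unfold _root_.interleave
  split_ifs
  exacts [han, hbn]

end Interleave

theorem Filter.Tendsto.upHalfQuasiCauchy {x : ℕ → ℝ} {ℓ : ℝ} (h : Tendsto x atTop (𝓝 ℓ)) :
    UpHalfQuasiCauchy x := by
  have drop : Tendsto (fun n => x n - x (n + 1)) atTop (𝓝 0) := by
    simpa using h.sub (h.comp (tendsto_add_atTop_nat 1))
  intro ε hε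
  exact eventually_atTop.mp (drop.eventually (gt_mem_nhds hε))

theorem tendsto_of_upHalfQuasiCauchy_interleave_const {a : ℕ → ℝ} {c : ℝ}
    (h : UpHalfQuasiCauchy (interleave a fun _ => c)) : Tendsto a atTop (𝓝 c) := by
  rw [Metric.tendsto_atTop]
  intro ε hε
  obtain ⟨n₀, hn₀⟩ := h ε hε
  refine ⟨n₀ + 1, fun k hk => ?_⟩
  obtain ⟨j, rfl⟩ : ∃ j, k = j + 1 := ⟨k - 1, by omega⟩
  have above : a (j + 1) - c < ε := by
    simpa using hn₀ (2 * (j + 1)) (by omega)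
  have below : c - a (j + 1) < ε := by
    have := hn₀ (2 * j + 1) (by omega)
    rwa [show 2 * j + 1 + 1 = 2 * (j + 1) by ring, interleave_two_mul_add_one,
      interleave_two_mul] at this
  rw [Real.dist_eq, abs_sub_lt_iff]
  exact ⟨above, below⟩

theorem stmt_9 (f : ℝ → ℝ) (E : Set ℝ)
    (hf : ∀ x : ℕ → ℝ, (∀ n, x n ∈ E) → UpHalfQuasiCauchy x → UpHalfQuasiCauchy (fun n => f (x n)))
    (x : ℕ → ℝ) (hx : ∀ n, x n ∈ E) (ℓ : ℝ) (hℓ : ℓ ∈ E)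
    (hconv : Filter.Tendsto x Filter.atTop (nhds ℓ)) :
    Filter.Tendsto (fun n => f (x n)) Filter.atTop (nhds (f ℓ)) := by
  have hfy := hf (interleave x fun _ => ℓ) (interleave_mem hx fun _ => hℓ)
    (hconv.interleave tendsto_const_nhds).upHalfQuasiCauchy
  rw [interleave_comp] at hfy
  exact tendsto_of_upHalfQuasiCauchy_interleave_const hfy
end

section
/- If f : ℝ → ℝ is downward half quasi-Cauchy continuous on a set E ⊆ ℝ, then f is sequentially continuous on E: for any sequence (x_n) of points in E converging to a point ℓ ∈ E, the sequence (f(x_n)) converges to f(ℓ). -/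
/-!
Interleave the sequence `x` with the constant sequence `ℓ`. The result still converges to `ℓ`,
so its consecutive differences tend to zero and it is downward half quasi-Cauchy; its points lie
in `E`. Hence `f(ℓ) - f(x k)` and `f(x (k + 1)) - f(ℓ)` are eventually below every `ε > 0`,
which bounds `|f(x k) - f(ℓ)|` from both sides.
-/

open Filter Topology

theorem Filter.Tendsto.downHalfQuasiCauchy {x : ℕ → ℝ} {ℓ : ℝ} (h : Tendsto x atTop (𝓝 ℓ)) :
    DownHalfQuasiCauchy x := by
  intro ε hε
  have hdiff : Tendsto (fun n => x (n + 1) - x n) atTop (𝓝 0) := by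
    simpa using (h.comp (tendsto_add_atTop_nat 1)).sub h
  exact eventually_atTop.mp (hdiff.eventually (gt_mem_nhds hε))

def interleaveConst {α : Type*} (a : ℕ → α) (c : α) (n : ℕ) : α :=
  if Even n then a (n / 2) else c

section interleaveConst

variable {α β : Type*} {a : ℕ → α} {c : α}

@[simp]
theorem interleaveConst_two_mul (k : ℕ) : interleaveConst a c (2 * k) = a k := by
  simp [interleaveConst]

@[simp]
theorem interleaveConst_two_mul_add_one (k : ℕ) : interleaveConst a c (2 * k + 1) = c := by
  simp [interleaveConst]

theorem interleaveConst_mem {s : Set α} (ha : ∀ n, a n ∈ s) (hc : c ∈ s) (n : ℕ) :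
    interleaveConst a c n ∈ s := by
  unfold interleaveConst
  split
  · exact ha _
  · exact hc

theorem comp_interleaveConst (f : α → β) :
    (fun n => f (interleaveConst a c n)) = interleaveConst (f ∘ a) (f c) := by
  funext n
  exact apply_ite f _ _ _

theorem tendsto_interleaveConst [TopologicalSpace α] (h : Tendsto a atTop (𝓝 c)) :
    Tendsto (interleaveConst a c) atTop (𝓝 c) := by
  refine tendsto_def.mpr fun U hU => ?_
  filter_upwards [(h.comp (Nat.tendsto_div_const_atTop two_ne_zero)).eventually_mem hU] with n hn
  rw [Set.mem_preimage, interleaveConst]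
  split
  · exact hn
  · exact mem_of_mem_nhds hU

end interleaveConst

theorem tendsto_of_downHalfQuasiCauchy_interleaveConst {a : ℕ → ℝ} {c : ℝ}
    (h : DownHalfQuasiCauchy (interleaveConst a c)) : Tendsto a atTop (𝓝 c) := by
  rw [Metric.tendsto_atTop]
  intro ε hε
  obtain ⟨n₀, hn₀⟩ := h ε hε
  refine ⟨n₀ + 1, fun k hk => ?_⟩
  have hbelow : c - a k < ε := by simpa using hn₀ (2 * k) (by omega)
  have habove : a k - c < ε := by
    obtain ⟨j, rfl⟩ : ∃ j, k = j + 1 := ⟨k - 1, by omega⟩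
    have := hn₀ (2 * j + 1) (by omega)
    rwa [show 2 * j + 1 + 1 = 2 * (j + 1) by ring, interleaveConst_two_mul,
      interleaveConst_two_mul_add_one] at this
  rw [Real.dist_eq, abs_sub_lt_iff]
  exact ⟨habove, hbelow⟩

theorem stmt_10 (f : ℝ → ℝ) (E : Set ℝ)
    (hf : ∀ x : ℕ → ℝ, (∀ n, x n ∈ E) → DownHalfQuasiCauchy x → DownHalfQuasiCauchy (fun n => f (x n)))
    (x : ℕ → ℝ) (hx : ∀ n, x n ∈ E) (ℓ : ℝ) (hℓ : ℓ ∈ E)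
    (hconv : Filter.Tendsto x Filter.atTop (nhds ℓ)) :
    Filter.Tendsto (fun n => f (x n)) Filter.atTop (nhds (f ℓ)) := by
  have hfy := hf _ (interleaveConst_mem hx hℓ) (tendsto_interleaveConst hconv).downHalfQuasiCauchy
  rw [comp_interleaveConst] at hfy
  exact tendsto_of_downHalfQuasiCauchy_interleaveConst hfy
end
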